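/- In the full-correlation n-cycle scenario, a vertex \(\tau \in \{-1,1\}^{2n}\) is local (lies in the convex hull of the deterministic points) if and only if \(\prod_{i=1}^{2n} \tau_i = 1\), i.e., the number of coordinates equal to −1 is even. -/

import Mathlib

/-! A deterministic point has coordinate product `(∏ a)² (∏ b)² = 1`. Conversely, a ±1 vector τ
with `∏ τ = 1` is deterministic: take `b k = ∏_{i<k} τ(inl i) τ(inr i)` and `a i = τ(inl i) b i`;
the condition `∏ τ = 1` is exactly what closes the cycle, `b (last + 1) = b 0`. Locality of a
vertex reduces to this, because a vertex of the cube `[-1,1]^{2n}` lying in the convex hull of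
points of the cube must be one of them. -/

namespace Stmt15

/-- The deterministic full-correlation points of the n-cycle scenario: for sign
assignments a, b ∈ {-1,1}ⁿ, the vector of correlators (a_i b_i)_i and (a_i b_{i+1})_i
on the 2n edges of the cycle. -/
def Det (n : ℕ) [NeZero n] : Set (Fin n ⊕ Fin n → ℝ) :=
  {τ | ∃ a b : Fin n → ℝ,
    (∀ i, a i = 1 ∨ a i = -1) ∧ (∀ j, b j = 1 ∨ b j = -1) ∧
    (∀ i, τ (Sum.inl i) = a i * b i) ∧ (∀ i, τ (Sum.inr i) = a i * b (i + 1))}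

end Stmt15

open Finset

section Signs

variable {R : Type*} [CommRing R] [NoZeroDivisors R]

theorem mul_eq_one_or_eq_neg_one {x y : R} (hx : x = 1 ∨ x = -1) (hy : y = 1 ∨ y = -1) :
    x * y = 1 ∨ x * y = -1 := by
  rw [← mul_self_eq_one_iff] at hx hy ⊢
  rw [mul_mul_mul_comm, hx, hy, one_mul]

theorem Finset.prod_eq_one_or_eq_neg_one {ι : Type*} {s : Finset ι} {f : ι → R}
    (hf : ∀ i ∈ s, f i = 1 ∨ f i = -1) : ∏ i ∈ s, f i = 1 ∨ ∏ i ∈ s, f i = -1 := by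
  rw [← mul_self_eq_one_iff, ← prod_mul_distrib]
  exact prod_eq_one fun i hi => mul_self_eq_one_iff.mpr (hf i hi)

end Signs

theorem Finset.prod_eq_neg_one_pow_card_filter {R ι : Type*} [CommMonoid R] [Neg R]
    {s : Finset ι} {f : ι → R} [DecidablePred fun i => f i = -1]
    (hf : ∀ i ∈ s, f i = 1 ∨ f i = -1) :
    ∏ i ∈ s, f i = (-1) ^ #{i ∈ s | f i = -1} := by
  rw [← prod_filter_mul_prod_filter_not s (fun i => f i = -1),
    prod_eq_pow_card fun i hi => (mem_filter.mp hi).2, prod_eq_one fun i hi => ?_, mul_one]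
  obtain ⟨his, hne⟩ := mem_filter.mp hi
  exact (hf i his).resolve_right hne

theorem Fin.prod_Iio_add_one_of_prod_eq_one {M : Type*} [CommMonoid M] {n : ℕ} [NeZero n]
    {f : Fin n → M} (hf : ∏ i, f i = 1) (k : Fin n) :
    ∏ i ∈ Iio (k + 1), f i = f k * ∏ i ∈ Iio k, f i := by
  obtain ⟨m, rfl⟩ : ∃ m, n = m + 1 := Nat.exists_eq_succ_of_ne_zero (NeZero.ne n)
  rw [← prod_insert (f := f) notMem_Iio_self, Iio_insert]
  induction k using Fin.lastCases with
  | last =>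
    rw [Fin.last_add_one, ← bot_eq_zero, Iio_bot, ← Fin.top_eq_last, Iic_top, hf, prod_empty]
  | cast j => rw [Fin.coeSucc_eq_succ]; rfl

theorem mem_of_mem_convexHull_of_mem_extremePoints {𝕜 E : Type*} [Ring 𝕜] [LinearOrder 𝕜]
    [IsStrictOrderedRing 𝕜] [DenselyOrdered 𝕜] [AddCommGroup E] [Module 𝕜 E]
    [Module.IsTorsionFree 𝕜 E] {A S : Set E} {x : E}
    (hA : Convex 𝕜 A) (hSA : S ⊆ A) (hx : x ∈ A.extremePoints 𝕜) (hxS : x ∈ convexHull 𝕜 S) :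
    x ∈ S :=
  extremePoints_convexHull_subset <|
    inter_extremePoints_subset_extremePoints_of_subset (convexHull_min hSA hA) ⟨hxS, hx⟩

theorem mem_extremePoints_pi_Icc {ι : Type*} {x : ι → ℝ} (hx : ∀ i, x i = 1 ∨ x i = -1) :
    x ∈ (Set.univ.pi fun _ => Set.Icc (-1 : ℝ) 1).extremePoints ℝ := by
  rw [extremePoints_pi, Set.extremePoints_Icc (by norm_num)]
  exact fun i _ => (hx i).symm

namespace Stmt15

section

variable {n : ℕ} [NeZero n]

theorem Det_subset_pi_Icc : Det n ⊆ Set.univ.pi fun _ => Set.Icc (-1 : ℝ) 1 := by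
  rintro τ ⟨a, b, ha, hb, hinl, hinr⟩ (e | e) -
  · rcases mul_eq_one_or_eq_neg_one (ha e) (hb e) with h | h <;> norm_num [hinl, h]
  · rcases mul_eq_one_or_eq_neg_one (ha e) (hb (e + 1)) with h | h <;> norm_num [hinr, h]

theorem prod_eq_one_of_mem_Det {τ : Fin n ⊕ Fin n → ℝ} (h : τ ∈ Det n) : ∏ e, τ e = 1 := by
  obtain ⟨a, b, ha, hb, hinl, hinr⟩ := h
  have hshift : ∏ i, b (i + 1) = ∏ i, b i := Equiv.prod_comp (Equiv.addRight 1) b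
  calc ∏ e, τ e = (∏ i, a i * a i) * ∏ i, b i * b i := by
        simp only [Fintype.prod_sum_type, hinl, hinr, prod_mul_distrib, hshift]; ring
    _ = 1 := by simp only [mul_self_eq_one_iff.mpr, ha, hb, prod_const_one, mul_one]

theorem mem_Det_of_prod_eq_one {τ : Fin n ⊕ Fin n → ℝ} (hτ : ∀ e, τ e = 1 ∨ τ e = -1)
    (h : ∏ e, τ e = 1) : τ ∈ Det n := by
  set c : Fin n → ℝ := fun i => τ (Sum.inl i) * τ (Sum.inr i)
  set b : Fin n → ℝ := fun k => ∏ i ∈ Iio k, c i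
  have hc : ∏ i, c i = 1 := by rwa [prod_mul_distrib, ← Fintype.prod_sum_type]
  have hb : ∀ k, b k = 1 ∨ b k = -1 := fun k =>
    prod_eq_one_or_eq_neg_one fun i _ => mul_eq_one_or_eq_neg_one (hτ _) (hτ _)
  have hsq : ∀ {x : ℝ}, (x = 1 ∨ x = -1) → x * x = 1 := mul_self_eq_one_iff.mpr
  refine ⟨fun i => τ (Sum.inl i) * b i, b, fun i => mul_eq_one_or_eq_neg_one (hτ _) (hb i), hb,
    fun i => by rw [mul_assoc, hsq (hb i), mul_one], fun i => ?_⟩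
  calc τ (Sum.inr i) = (τ (Sum.inl i) * τ (Sum.inl i)) * τ (Sum.inr i) * (b i * b i) := by
        rw [hsq (hτ _), hsq (hb i), one_mul, mul_one]
    _ = τ (Sum.inl i) * b i * (c i * b i) := by ring
    _ = τ (Sum.inl i) * b i * b (i + 1) :=
      congrArg _ (Fin.prod_Iio_add_one_of_prod_eq_one hc i).symm

end

open Classical in
/-- A vertex τ ∈ {-1,1}^(2n) of the full-correlation n-cycle scenario is local (lies
in the convex hull of the deterministic points) iff the product of its coordinates is
1, i.e. iff the number of its coordinates equal to -1 is even. -/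
theorem cycle_vertex_local_iff (n : ℕ) [NeZero n] (τ : Fin n ⊕ Fin n → ℝ)
    (hτ : ∀ e, τ e = 1 ∨ τ e = -1) :
    (τ ∈ convexHull ℝ (Det n) ↔ ∏ e, τ e = 1) ∧
    ((∏ e, τ e = 1) ↔ Even ((Finset.univ.filter (fun e : Fin n ⊕ Fin n => τ e = -1)).card)) := by
  refine ⟨⟨fun h => ?_, fun h => subset_convexHull ℝ _ (mem_Det_of_prod_eq_one hτ h)⟩, ?_⟩
  · have hcube : Convex ℝ (Set.univ.pi fun _ : Fin n ⊕ Fin n => Set.Icc (-1 : ℝ) 1) :=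
      convex_pi fun _ _ => convex_Icc _ _
    exact prod_eq_one_of_mem_Det <| mem_of_mem_convexHull_of_mem_extremePoints hcube
      Det_subset_pi_Icc (mem_extremePoints_pi_Icc hτ) h
  · rw [prod_eq_neg_one_pow_card_filter fun e _ => hτ e]
    exact neg_one_pow_eq_one_iff_even (by norm_num)

end Stmt15
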